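/- Let T be an invertible measure-preserving transformation of a probability space (X, μ), f ∈ L²_μ, d ∈ ℕ, and let 𝒰_d : 𝒦_d → 𝒦_d be the compression of the Koopman operator, 𝒰_d g = Π_{𝒦_d}(g∘T) for g ∈ 𝒦_d. Define the autocorrelations A(n) = ⟨f∘Tⁿ, f⟩_{L²_μ} and A_d(n) = ⟨𝒰_dⁿ f, f⟩_{L²_μ}. Then: (i) A(n) = A_d(n) for every n ≤ d; (ii) |A(d+1) − A_d(d+1)| ≤ ‖Π_{𝒦_d}(f∘T) − f∘T‖_{L²_μ} · ‖f‖_{L²_μ}; and (iii) if Π_{𝒦_d⁻}^⊥ f ≠ 0, then for every n ≥ d+2, |A(n) − A_d(n)| ≤ (n − d) · (‖Π_{𝒦_d}^⊥(f∘T)‖_{L²_μ} / ‖Π_{𝒦_d⁻}^⊥ f‖_{L²_μ}) · ‖f‖²_{L²_μ}. -/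

import Mathlib

open MeasureTheory Filter

/-- The Koopman operator `𝒰_T : g ↦ g ∘ T` on `L²_μ`. -/
noncomputable def koopman {X : Type*} [MeasurableSpace X] {μ : Measure X}
    (T : X → X) (hT : MeasurePreserving T μ μ) : Lp ℂ 2 μ →L[ℂ] Lp ℂ 2 μ :=
  (Lp.compMeasurePreservingₗᵢ ℂ T hT).toContinuousLinearMap

/-- The Krylov space `𝒦_d = span {f, f∘T⁻¹, …, f∘T^{-d+1}}`; `T'` plays the role of
the inverse of `T`. -/
noncomputable def krylov {X : Type*} [MeasurableSpace X] {μ : Measure X}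
    (T' : X → X) (hT' : MeasurePreserving T' μ μ) (f : Lp ℂ 2 μ) (d : ℕ) :
    Submodule ℂ (Lp ℂ 2 μ) :=
  Submodule.span ℂ (Set.range fun j : Fin d => ((koopman T' hT') ^ (j : ℕ)) f)

instance {X : Type*} [MeasurableSpace X] {μ : Measure X}
    (T' : X → X) (hT' : MeasurePreserving T' μ μ) (f : Lp ℂ 2 μ) (d : ℕ) :
    FiniteDimensional ℂ (krylov T' hT' f d) :=
  FiniteDimensional.span_of_finite ℂ (Set.finite_range _)

/-- The reduced Krylov space `𝒦_d⁻ = span {f∘T⁻¹, …, f∘T^{-d+1}}`. -/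
noncomputable def krylovMinus {X : Type*} [MeasurableSpace X] {μ : Measure X}
    (T' : X → X) (hT' : MeasurePreserving T' μ μ) (f : Lp ℂ 2 μ) (d : ℕ) :
    Submodule ℂ (Lp ℂ 2 μ) :=
  Submodule.span ℂ (Set.range fun j : Fin (d - 1) => ((koopman T' hT') ^ ((j : ℕ) + 1)) f)

instance {X : Type*} [MeasurableSpace X] {μ : Measure X}
    (T' : X → X) (hT' : MeasurePreserving T' μ μ) (f : Lp ℂ 2 μ) (d : ℕ) :
    FiniteDimensional ℂ (krylovMinus T' hT' f d) :=
  FiniteDimensional.span_of_finite ℂ (Set.finite_range _)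

/-- The compression `𝒰_d = Π_{𝒦_d} ∘ 𝒰 : 𝒦_d → 𝒦_d` of the Koopman operator to the
Krylov space. -/
noncomputable def compressedKoopman {X : Type*} [MeasurableSpace X] {μ : Measure X}
    (T T' : X → X) (hT : MeasurePreserving T μ μ) (hT' : MeasurePreserving T' μ μ)
    (f : Lp ℂ 2 μ) (d : ℕ) :
    krylov T' hT' f d →L[ℂ] krylov T' hT' f d :=
  (Submodule.orthogonalProjectionOnto (krylov T' hT' f d)).comp
    ((koopman T hT).comp (krylov T' hT' f d).subtypeL)

/-!
Write `eₙ = 𝒰ⁿ f − 𝒰_dⁿ f`, with `𝒰_d` extended to `L²_μ` as `Π_{𝒦_d} ∘ 𝒰`. Then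
`eₙ₊₁ = 𝒰 eₙ + Π_{𝒦_d}^⊥ (𝒰 𝒰_dⁿ f)`, and the second term is orthogonal to `𝒦_d`. Since
`𝒰* = 𝒰⁻¹` moves `f ∘ T^{-k}` to `f ∘ T^{-k-1}`, this gives `⟨eₙ₊ⱼ, f⟩ = ⟨eₙ, f ∘ T^{-j}⟩` for
`j ≤ d`. As `e₀ = 0` this proves (i), and with `j = d` it reduces (ii) and (iii) to bounds on
`‖e₁‖ = ‖Π_{𝒦_d}^⊥ 𝒰 f‖` and on `‖eₘ‖`. Each step of the recursion adds at most
`‖Π_{𝒦_d}^⊥ 𝒰 g‖` for some `g ∈ 𝒦_d` with `‖g‖ ≤ ‖f‖`. Writing `g = c f + w` with `w ∈ 𝒦_d⁻`,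
so that `𝒰 w ∈ 𝒦_d`, gives `‖Π_{𝒦_d}^⊥ 𝒰 g‖ = |c| ‖Π_{𝒦_d}^⊥ 𝒰 f‖` and
`|c| ‖Π_{𝒦_d⁻}^⊥ f‖ = ‖Π_{𝒦_d⁻}^⊥ g‖ ≤ ‖g‖`.
-/

open scoped InnerProductSpace

namespace Submodule

variable {𝕜 E : Type*} [RCLike 𝕜] [NormedAddCommGroup E] [InnerProductSpace 𝕜 E]
  (K : Submodule 𝕜 E) [K.HasOrthogonalProjection]

theorem norm_sub_starProjection_apply_le (v : E) : ‖v - K.starProjection v‖ ≤ ‖v‖ := by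
  simpa using Kᗮ.norm_starProjection_apply_le v

theorem sub_starProjection_smul_add {w : E} (hw : w ∈ K) (c : 𝕜) (v : E) :
    c • v + w - K.starProjection (c • v + w) = c • (v - K.starProjection v) := by
  rw [map_add, map_smul, starProjection_eq_self_iff.mpr hw]
  module

end Submodule

section Compression

variable {𝕜 E : Type*} [RCLike 𝕜] [NormedAddCommGroup E] [InnerProductSpace 𝕜 E]

theorem norm_sub_starProjection_map_mul_le {K L : Submodule 𝕜 E} [K.HasOrthogonalProjection]
    [L.HasOrthogonalProjection] (U : E →L[𝕜] E) (hUL : L.map (U : E →ₗ[𝕜] E) ≤ K) {f g : E}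
    (hg : g ∈ (𝕜 ∙ f) ⊔ L) :
    ‖U g - K.starProjection (U g)‖ * ‖f - L.starProjection f‖ ≤
      ‖U f - K.starProjection (U f)‖ * ‖g‖ := by
  obtain ⟨_, hx, w, hw, rfl⟩ := Submodule.mem_sup.mp hg
  obtain ⟨c, rfl⟩ := Submodule.mem_span_singleton.mp hx
  have hUw : U w ∈ K := hUL (Submodule.mem_map_of_mem hw)
  calc ‖U (c • f + w) - K.starProjection (U (c • f + w))‖ * ‖f - L.starProjection f‖
      = ‖U f - K.starProjection (U f)‖ * ‖c • f + w - L.starProjection (c • f + w)‖ := by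
        rw [map_add, map_smul, K.sub_starProjection_smul_add hUw,
          L.sub_starProjection_smul_add hw, norm_smul, norm_smul]
        ring
    _ ≤ ‖U f - K.starProjection (U f)‖ * ‖c • f + w‖ := by
        gcongr
        exact L.norm_sub_starProjection_apply_le _

variable (K : Submodule 𝕜 E) [K.HasOrthogonalProjection] (U : E →L[𝕜] E) (f : E)

theorem coe_compression_pow_apply (n : ℕ) (x : K) :
    (((K.orthogonalProjectionOnto ∘L U ∘L K.subtypeL) ^ n) x : E) =
      ((K.starProjection ∘L U) ^ n) x := by
  induction n with
  | zero => rfl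
  | succ n ih =>
    rw [pow_succ', pow_succ', mul_apply_eq_comp, mul_apply_eq_comp, ← ih]
    rfl

theorem compression_pow_apply_mem (hf : f ∈ K) (n : ℕ) :
    ((K.starProjection ∘L U) ^ n) f ∈ K := by
  cases n with
  | zero => exact hf
  | succ n =>
    rw [pow_succ', mul_apply_eq_comp]
    exact K.starProjection_apply_mem _

theorem norm_compression_pow_apply_le (hU : ∀ x, ‖U x‖ ≤ ‖x‖) (n : ℕ) :
    ‖((K.starProjection ∘L U) ^ n) f‖ ≤ ‖f‖ := by
  induction n with
  | zero => rfl
  | succ n ih =>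
    rw [pow_succ', mul_apply_eq_comp]
    exact (K.norm_starProjection_apply_le _).trans ((hU _).trans ih)

noncomputable def compressionError (n : ℕ) : E :=
  (U ^ n) f - ((K.starProjection ∘L U) ^ n) f

theorem compressionError_zero : compressionError K U f 0 = 0 :=
  sub_self f

theorem compressionError_one : compressionError K U f 1 = U f - K.starProjection (U f) := by
  simp [compressionError]

theorem compressionError_succ (n : ℕ) :
    compressionError K U f (n + 1) = U (compressionError K U f n) +
      (U (((K.starProjection ∘L U) ^ n) f) -
        K.starProjection (U (((K.starProjection ∘L U) ^ n) f))) := by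
  simp only [compressionError, pow_succ', mul_apply_eq_comp, map_sub,
    ContinuousLinearMap.comp_apply]
  abel

variable {U} {V : E →L[𝕜] E}

theorem inner_compressionError_succ (hadj : ∀ x y, ⟪U x, y⟫_𝕜 = ⟪x, V y⟫_𝕜) (n : ℕ) {y : E}
    (hy : y ∈ K) :
    ⟪compressionError K U f (n + 1), y⟫_𝕜 = ⟪compressionError K U f n, V y⟫_𝕜 := by
  rw [compressionError_succ, inner_add_left, K.starProjection_inner_eq_zero _ _ hy, add_zero, hadj]

theorem inner_compressionError_add (hadj : ∀ x y, ⟪U x, y⟫_𝕜 = ⟪x, V y⟫_𝕜) {j : ℕ} {y : E}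
    (hy : ∀ k < j, (V ^ k) y ∈ K) (n : ℕ) :
    ⟪compressionError K U f (n + j), y⟫_𝕜 = ⟪compressionError K U f n, (V ^ j) y⟫_𝕜 := by
  induction j generalizing n with
  | zero => rfl
  | succ j ih =>
    rw [← add_assoc, add_right_comm, ih (fun k hk => hy k (by omega)),
      inner_compressionError_succ K f hadj n (hy j (by omega)), pow_succ',
      mul_apply_eq_comp]

theorem norm_compressionError_le (hU : ∀ x, ‖U x‖ ≤ ‖x‖) (hf : f ∈ K) {c : ℝ} (hc₀ : 0 ≤ c)
    (hc : ∀ g ∈ K, ‖U g - K.starProjection (U g)‖ ≤ c * ‖g‖) (n : ℕ) :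
    ‖compressionError K U f n‖ ≤ n * c * ‖f‖ := by
  induction n with
  | zero => simp [compressionError_zero]
  | succ n ih =>
    rw [compressionError_succ]
    calc _ ≤ ‖U (compressionError K U f n)‖ + c * ‖((K.starProjection ∘L U) ^ n) f‖ :=
          (norm_add_le _ _).trans (add_le_add le_rfl (hc _ (compression_pow_apply_mem K U f hf n)))
      _ ≤ n * c * ‖f‖ + c * ‖f‖ := by
          gcongr
          · exact (hU _).trans ih
          · exact norm_compression_pow_apply_le K U f hU n
      _ = (n + 1 : ℕ) * c * ‖f‖ := by push_cast; ring

end Compression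

section Koopman

variable {X : Type*} [MeasurableSpace X] {μ : Measure X} {T T' : X → X}
  (hT : MeasurePreserving T μ μ) (hT' : MeasurePreserving T' μ μ)

theorem norm_koopman_apply (g : Lp ℂ 2 μ) : ‖koopman T hT g‖ = ‖g‖ :=
  Lp.norm_compMeasurePreserving g hT

theorem norm_koopman_pow_apply (n : ℕ) (g : Lp ℂ 2 μ) : ‖(koopman T hT ^ n) g‖ = ‖g‖ := by
  induction n with
  | zero => rfl
  | succ n ih => rw [pow_succ', mul_apply_eq_comp, norm_koopman_apply, ih]

theorem koopman_koopman_apply (hinv : ∀ᵐ x ∂μ, T' (T x) = x) (g : Lp ℂ 2 μ) :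
    koopman T hT (koopman T' hT' g) = g := by
  apply Lp.ext
  have hcomp : ⇑(koopman T' hT' g) ∘ T =ᵐ[μ] (⇑g ∘ T') ∘ T :=
    hT.quasiMeasurePreserving.ae_eq (Lp.coeFn_compMeasurePreserving _ hT')
  refine (Lp.coeFn_compMeasurePreserving _ hT).trans (hcomp.trans ?_)
  filter_upwards [hinv] with x hx
  simp [hx]

theorem inner_koopman_apply_left (hinv : ∀ᵐ x ∂μ, T' (T x) = x) (a b : Lp ℂ 2 μ) :
    ⟪koopman T hT a, b⟫_ℂ = ⟪a, koopman T' hT' b⟫_ℂ := by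
  conv_lhs => rw [← koopman_koopman_apply hT hT' hinv b]
  exact (Lp.compMeasurePreservingₗᵢ ℂ T hT).inner_map_map a _

theorem krylov_le_span_sup_krylovMinus (f : Lp ℂ 2 μ) (d : ℕ) :
    krylov T' hT' f d ≤ (ℂ ∙ f) ⊔ krylovMinus T' hT' f d := by
  refine Submodule.span_le.mpr ?_
  rintro _ ⟨⟨_ | i, hi⟩, rfl⟩
  · exact Submodule.mem_sup_left (Submodule.mem_span_singleton_self f)
  · exact Submodule.mem_sup_right (Submodule.subset_span ⟨⟨i, by omega⟩, rfl⟩)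

theorem map_krylovMinus_le_krylov (hinv : ∀ᵐ x ∂μ, T' (T x) = x) (f : Lp ℂ 2 μ) (d : ℕ) :
    (krylovMinus T' hT' f d).map (koopman T hT : Lp ℂ 2 μ →ₗ[ℂ] Lp ℂ 2 μ) ≤
      krylov T' hT' f d := by
  rw [krylovMinus, Submodule.map_span, Submodule.span_le]
  rintro _ ⟨_, ⟨j, rfl⟩, rfl⟩
  simp only [ContinuousLinearMap.coe_coe]
  rw [pow_succ', mul_apply_eq_comp, koopman_koopman_apply hT hT' hinv]
  exact Submodule.subset_span ⟨⟨j, by omega⟩, rfl⟩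

theorem norm_sub_starProjection_koopman_le (hinv : ∀ᵐ x ∂μ, T' (T x) = x) {f g : Lp ℂ 2 μ} {d : ℕ}
    (hg : g ∈ krylov T' hT' f d)
    (hf : 0 < ‖f - (krylovMinus T' hT' f d).starProjection f‖) :
    ‖koopman T hT g - (krylov T' hT' f d).starProjection (koopman T hT g)‖ ≤
      ‖koopman T hT f - (krylov T' hT' f d).starProjection (koopman T hT f)‖ /
        ‖f - (krylovMinus T' hT' f d).starProjection f‖ * ‖g‖ := by
  rw [div_mul_eq_mul_div, le_div_iff₀ hf]
  exact norm_sub_starProjection_map_mul_le _ (map_krylovMinus_le_krylov hT hT' hinv f d)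
    (krylov_le_span_sup_krylovMinus hT' f d hg)

end Koopman

theorem autocorrelation_bounds_general
    {X : Type*} [MeasurableSpace X] (μ : Measure X)
    (T T' : X → X) (hT : MeasurePreserving T μ μ) (hT' : MeasurePreserving T' μ μ)
    (hinv₁ : ∀ᵐ x ∂μ, T' (T x) = x)
    (f : Lp ℂ 2 μ) (d : ℕ) (hfK : f ∈ krylov T' hT' f d) :
    (∀ n : ℕ, n ≤ d →
      (inner ℂ (((koopman T hT) ^ n) f) f : ℂ) =
      (inner ℂ ((((compressedKoopman T T' hT hT' f d) ^ n)
          (⟨f, hfK⟩ : krylov T' hT' f d) : krylov T' hT' f d) : Lp ℂ 2 μ) f : ℂ)) ∧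
    (‖(inner ℂ (((koopman T hT) ^ (d + 1)) f) f : ℂ) -
        (inner ℂ ((((compressedKoopman T T' hT hT' f d) ^ (d + 1))
          (⟨f, hfK⟩ : krylov T' hT' f d) : krylov T' hT' f d) : Lp ℂ 2 μ) f : ℂ)‖ ≤
      ‖((Submodule.orthogonalProjectionOnto (krylov T' hT' f d)) (koopman T hT f) : Lp ℂ 2 μ) -
          koopman T hT f‖ * ‖f‖) ∧
    (f - ((Submodule.orthogonalProjectionOnto (krylovMinus T' hT' f d)) f : Lp ℂ 2 μ) ≠ 0 →
      ∀ n : ℕ, d + 2 ≤ n →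
        ‖(inner ℂ (((koopman T hT) ^ n) f) f : ℂ) -
            (inner ℂ ((((compressedKoopman T T' hT hT' f d) ^ n)
              (⟨f, hfK⟩ : krylov T' hT' f d) : krylov T' hT' f d) : Lp ℂ 2 μ) f : ℂ)‖ ≤
          ((n - d : ℕ) : ℝ) *
            (‖koopman T hT f -
                ((Submodule.orthogonalProjectionOnto (krylov T' hT' f d)) (koopman T hT f) : Lp ℂ 2 μ)‖ /
              ‖f - ((Submodule.orthogonalProjectionOnto (krylovMinus T' hT' f d)) f : Lp ℂ 2 μ)‖) *
            ‖f‖ ^ 2) := by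
  set U := koopman T hT
  set K := krylov T' hT' f d
  have hdiff : ∀ n, ⟪(U ^ n) f, f⟫_ℂ -
      ⟪(((compressedKoopman T T' hT hT' f d ^ n) ⟨f, hfK⟩ : K) : Lp ℂ 2 μ), f⟫_ℂ =
        ⟪compressionError K U f n, f⟫_ℂ := fun n => by
    rw [compressedKoopman, coe_compression_pow_apply, ← inner_sub_left]
    rfl
  have hshift : ∀ j ≤ d, ∀ n, ⟪compressionError K U f (n + j), f⟫_ℂ =
      ⟪compressionError K U f n, (koopman T' hT' ^ j) f⟫_ℂ := fun j hj =>
    inner_compressionError_add K f (inner_koopman_apply_left hT hT' hinv₁)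
      fun k hk => Submodule.subset_span ⟨⟨k, by omega⟩, rfl⟩
  refine ⟨fun n hn => ?_, ?_, fun hne n hn => ?_⟩
  · rw [← sub_eq_zero, hdiff, ← zero_add n, hshift n hn, compressionError_zero, inner_zero_left]
  · rw [hdiff, add_comm, hshift d le_rfl, compressionError_one, norm_sub_rev,
      ← norm_koopman_pow_apply hT' d f]
    exact norm_inner_le_norm _ _
  · obtain ⟨m, rfl⟩ : ∃ m, n = m + d := ⟨n - d, by omega⟩
    have hgrowth := norm_compressionError_le K f (fun x => (norm_koopman_apply hT x).le) hfK
      (by positivity) (fun g hg => norm_sub_starProjection_koopman_le hT hT' hinv₁ hg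
        (norm_pos_iff.mpr hne)) m
    rw [hdiff, hshift d le_rfl, Nat.add_sub_cancel]
    calc _ ≤ ‖compressionError K U f m‖ * ‖(koopman T' hT' ^ d) f‖ := norm_inner_le_norm _ _
      _ ≤ _ := by
        rw [norm_koopman_pow_apply, sq, ← mul_assoc]
        gcongr
        exact hgrowth

/-- autocorrelation reproduction of the least squares filter.  With
`A(n) = ⟨𝒰ⁿ f, f⟩` and `A_d(n) = ⟨𝒰_dⁿ f, f⟩`: (i) `A(n) = A_d(n)` for `n ≤ d`;
(ii) `|A(d+1) − A_d(d+1)| ≤ ‖Π_{𝒦_d}(𝒰f) − 𝒰f‖·‖f‖`; (iii) if `Π_{𝒦_d⁻}^⊥ f ≠ 0` then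
for `n ≥ d+2`,
`|A(n) − A_d(n)| ≤ (n−d)·(‖Π_{𝒦_d}^⊥ 𝒰f‖ / ‖Π_{𝒦_d⁻}^⊥ f‖)·‖f‖²`. -/
theorem autocorrelation_bounds
    {X : Type*} [MeasurableSpace X] (μ : Measure X) [IsProbabilityMeasure μ]
    (T T' : X → X) (hT : MeasurePreserving T μ μ) (hT' : MeasurePreserving T' μ μ)
    (hinv₁ : ∀ᵐ x ∂μ, T' (T x) = x) (hinv₂ : ∀ᵐ x ∂μ, T (T' x) = x)
    (f : Lp ℂ 2 μ) (d : ℕ) (hd : 0 < d) (hfK : f ∈ krylov T' hT' f d) :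
    (∀ n : ℕ, n ≤ d →
      (inner ℂ (((koopman T hT) ^ n) f) f : ℂ) =
      (inner ℂ ((((compressedKoopman T T' hT hT' f d) ^ n)
          (⟨f, hfK⟩ : krylov T' hT' f d) : krylov T' hT' f d) : Lp ℂ 2 μ) f : ℂ)) ∧
    (‖(inner ℂ (((koopman T hT) ^ (d + 1)) f) f : ℂ) -
        (inner ℂ ((((compressedKoopman T T' hT hT' f d) ^ (d + 1))
          (⟨f, hfK⟩ : krylov T' hT' f d) : krylov T' hT' f d) : Lp ℂ 2 μ) f : ℂ)‖ ≤
      ‖((Submodule.orthogonalProjectionOnto (krylov T' hT' f d)) (koopman T hT f) : Lp ℂ 2 μ) -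
          koopman T hT f‖ * ‖f‖) ∧
    (f - ((Submodule.orthogonalProjectionOnto (krylovMinus T' hT' f d)) f : Lp ℂ 2 μ) ≠ 0 →
      ∀ n : ℕ, d + 2 ≤ n →
        ‖(inner ℂ (((koopman T hT) ^ n) f) f : ℂ) -
            (inner ℂ ((((compressedKoopman T T' hT hT' f d) ^ n)
              (⟨f, hfK⟩ : krylov T' hT' f d) : krylov T' hT' f d) : Lp ℂ 2 μ) f : ℂ)‖ ≤
          ((n - d : ℕ) : ℝ) *
            (‖koopman T hT f -
                ((Submodule.orthogonalProjectionOnto (krylov T' hT' f d)) (koopman T hT f) : Lp ℂ 2 μ)‖ /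
              ‖f - ((Submodule.orthogonalProjectionOnto (krylovMinus T' hT' f d)) f : Lp ℂ 2 μ)‖) *
            ‖f‖ ^ 2) :=
  autocorrelation_bounds_general μ T T' hT hT' hinv₁ f d hfK
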